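/- arXiv:2202.05501 — 2 statements merged into one kernel-verified Lean document; each statement's English description precedes it below -/
import Mathlib

section
/- Let f : ℝⁿ → ℝ be convex and differentiable with minimizer X⋆, and let X be a twice differentiable solution of 0 = Ẍ + (3/t)Ẋ + ∇f(X) on (0,∞) with X(t) → X₀, Ẋ(t) → 0 as t → 0⁺. Define E(t) = t²(f(X(t)) − f⋆) + (1/2)‖tẊ(t) + 2(X(t) − X⋆)‖² + ∫₀ᵗ 2s( f⋆ − f(X(s)) − ⟨∇f(X(s)), X⋆ − X(s)⟩ ) ds. Then E(t) = 2‖X₀ − X⋆‖² for all t > 0, i.e., E is a conserved quantity. -/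
open Filter MeasureTheory Set
open scoped RealInnerProductSpace Topology

/-!
In the dilated coordinate `W(t) = t²(X(t) - X⋆)` one has `Ẇ = t V` with `V = t Ẋ + 2 (X - X⋆)`, and
the ODE turns into `V̇ = -t ∇f(X)`. Hence the energy `t² (f(X) - f⋆) + ½‖V‖²` decreases at the rate
`2t (f⋆ - f(X) - ⟪∇f(X), X⋆ - X⟫)`, and it tends to `2‖X₀ - X⋆‖²` as `t → 0⁺`. Convexity makes this
rate nonnegative, which is what makes it integrable up to `t = 0`, so the fundamental theorem of
calculus applies on `[0, t]`.
-/

theorem intervalIntegral.integral_eq_sub_of_tendsto_of_hasDerivAt_of_nonneg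
    {φ φ' : ℝ → ℝ} {a b L : ℝ} (hab : a < b) (hφa : Tendsto φ (𝓝[>] a) (𝓝 L))
    (hφ : ∀ s ∈ Ioc a b, HasDerivAt φ (φ' s) s) (hφ' : ∀ s ∈ Ioo a b, 0 ≤ φ' s) :
    ∫ s in a..b, φ' s = φ b - L := by
  classical
  -- `φ` itself may be anything at `a`: replace its value there by the limit `L`.
  set ψ := Function.update φ a L
  have hψφ : ∀ s, a < s → ψ =ᶠ[𝓝 s] φ := fun s hs =>
    eventually_of_mem (Ioi_mem_nhds hs) fun u hu => Function.update_of_ne (ne_of_gt hu) _ _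
  have hderiv : ∀ s ∈ Ioo a b, HasDerivAt ψ (φ' s) s := fun s hs =>
    (hφ s (Ioo_subset_Ioc_self hs)).congr_of_eventuallyEq (hψφ s hs.1)
  have hcont : ContinuousOn ψ (Icc a b) := by
    intro s hs
    rcases hs.1.eq_or_lt with rfl | has
    · refine continuousWithinAt_update_same.2 (hφa.mono_left (nhdsWithin_mono _ ?_))
      exact fun u hu => lt_of_le_of_ne hu.1.1 (Ne.symm hu.2)
    · exact ((hφ s ⟨has, hs.2⟩).continuousAt.congr_of_eventuallyEq
        (hψφ s has)).continuousWithinAt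
  have hint : IntervalIntegrable φ' volume a b := by
    refine intervalIntegral.intervalIntegrable_deriv_of_nonneg (g := ψ) ?_ ?_ ?_
    · rwa [uIcc_of_le hab.le]
    all_goals simpa only [min_eq_left hab.le, max_eq_right hab.le]
  rw [intervalIntegral.integral_eq_sub_of_hasDerivAt_of_le hab.le hcont hderiv hint]
  simp [ψ, Function.update_of_ne hab.ne']

section
variable {E : Type*} [NormedAddCommGroup E] [InnerProductSpace ℝ E]

def agmVelocity (X X' : ℝ → E) (Xs : E) (t : ℝ) : E :=
  t • X' t + (2:ℝ) • (X t - Xs)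

noncomputable def agmEnergy (f : E → ℝ) (X X' : ℝ → E) (Xs : E) (t : ℝ) : ℝ :=
  t ^ 2 * (f (X t) - f Xs) + (1 / 2) * ‖agmVelocity X X' Xs t‖ ^ 2

variable {X X' X'' : ℝ → E} {Xs G : E} {s : ℝ}

theorem hasDerivAt_agmVelocity (hX' : HasDerivAt X (X' s) s) (hX'' : HasDerivAt X' (X'' s) s)
    (hs : s ≠ 0) (hODE : X'' s + (3 / s) • X' s + G = 0) :
    HasDerivAt (agmVelocity X X' Xs) (-(s • G)) s := by
  have hderiv : HasDerivAt (agmVelocity X X' Xs) (s • X'' s + (3:ℝ) • X' s) s := by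
    refine (((hasDerivAt_id' s).smul hX'').add ((hX'.sub_const Xs).const_smul (2:ℝ))).congr_deriv ?_
    module
  convert hderiv using 1
  have := congrArg (s • ·) hODE
  simp only [smul_add, smul_smul, mul_div_cancel₀ _ hs, smul_zero] at this
  linear_combination (norm := module) -this

theorem hasDerivAt_agmEnergy [CompleteSpace E] {f : E → ℝ} (hf : HasGradientAt f G (X s))
    (hX' : HasDerivAt X (X' s) s) (hX'' : HasDerivAt X' (X'' s) s)
    (hs : s ≠ 0) (hODE : X'' s + (3 / s) • X' s + G = 0) :
    HasDerivAt (agmEnergy f X X' Xs) (-(2 * s * (f Xs - f (X s) - ⟪G, Xs - X s⟫))) s := by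
  have hfX : HasDerivAt (fun u => f (X u)) ⟪G, X' s⟫ s :=
    (hf.hasFDerivAt.comp_hasDerivAt s hX').congr_deriv (by simp)
  have hV := hasDerivAt_agmVelocity (Xs := Xs) hX' hX'' hs hODE
  refine (((hasDerivAt_pow 2 s).mul (hfX.sub_const (f Xs))).add
    ((hV.norm_sq).const_mul (1 / 2))).congr_deriv ?_
  simp only [agmVelocity, real_inner_comm G, inner_neg_right, inner_smul_right, inner_add_right,
    inner_sub_right]
  norm_num
  ring

theorem tendsto_agmEnergy_nhdsGT_zero {f : E → ℝ} {X₀ : E} (hf : ContinuousAt f X₀)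
    (hX0 : Tendsto X (𝓝[>] 0) (𝓝 X₀)) (hXd0 : Tendsto X' (𝓝[>] 0) (𝓝 0)) :
    Tendsto (agmEnergy f X X' Xs) (𝓝[>] 0) (𝓝 (2 * ‖X₀ - Xs‖ ^ 2)) := by
  have hid : Tendsto (fun t : ℝ => t) (𝓝[>] 0) (𝓝 0) := nhdsWithin_le_nhds
  have hV : Tendsto (agmVelocity X X' Xs) (𝓝[>] 0) (𝓝 ((0:ℝ) • (0:E) + (2:ℝ) • (X₀ - Xs))) :=
    (hid.smul hXd0).add ((hX0.sub_const Xs).const_smul 2)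
  have hE : Tendsto (agmEnergy f X X' Xs) (𝓝[>] 0)
      (𝓝 (0 ^ 2 * (f X₀ - f Xs) + 1 / 2 * ‖(0:ℝ) • (0:E) + (2:ℝ) • (X₀ - Xs)‖ ^ 2)) :=
    ((hid.pow 2).mul ((hf.tendsto.comp hX0).sub_const (f Xs))).add
      ((hV.norm.pow 2).const_mul (1 / 2))
  convert hE using 2
  rw [zero_smul, zero_add, norm_smul, Real.norm_two]
  ring

end

theorem agm_ode_conservation_law_general
    {E : Type*} [NormedAddCommGroup E] [InnerProductSpace ℝ E] [CompleteSpace E]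
    (f : E → ℝ) (g : E → E)
    (hgrad : ∀ x, HasGradientAt f (g x) x)
    (hconv : ∀ x y, 0 ≤ f x - f y - ⟪g y, x - y⟫)
    (X X' X'' : ℝ → E)
    (hX' : ∀ t ∈ Set.Ioi (0:ℝ), HasDerivAt X (X' t) t)
    (hX'' : ∀ t ∈ Set.Ioi (0:ℝ), HasDerivAt X' (X'' t) t)
    (hODE : ∀ t ∈ Set.Ioi (0:ℝ), X'' t + (3 / t) • X' t + g (X t) = 0)
    (X₀ : E) (hX0 : Tendsto X (𝓝[>] (0:ℝ)) (𝓝 X₀))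
    (hXd0 : Tendsto X' (𝓝[>] (0:ℝ)) (𝓝 0))
    (Xs : E) :
    ∀ t > (0:ℝ),
      t ^ 2 * (f (X t) - f Xs)
        + (1 / 2) * ‖t • X' t + (2:ℝ) • (X t - Xs)‖ ^ 2
        + ∫ s in (0:ℝ)..t, 2 * s * (f Xs - f (X s) - ⟪g (X s), Xs - X s⟫)
      = 2 * ‖X₀ - Xs‖ ^ 2 := by
  intro t ht
  have hlim := tendsto_agmEnergy_nhdsGT_zero (Xs := Xs) (hgrad X₀).differentiableAt.continuousAt
    hX0 hXd0
  have hdissipation := intervalIntegral.integral_eq_sub_of_tendsto_of_hasDerivAt_of_nonneg ht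
    hlim.neg (fun s hs => (hasDerivAt_agmEnergy (hgrad (X s)) (hX' s hs.1) (hX'' s hs.1)
      hs.1.ne' (hODE s hs.1)).neg)
    (fun s hs => by simpa only [neg_neg] using mul_nonneg (by linarith [hs.1]) (hconv Xs (X s)))
  simp only [neg_neg] at hdissipation
  rw [hdissipation]
  simp only [agmEnergy, agmVelocity]
  ring

theorem agm_ode_conservation_law
    {E : Type*} [NormedAddCommGroup E] [InnerProductSpace ℝ E] [CompleteSpace E]
    (f : E → ℝ) (g : E → E)
    (hgrad : ∀ x, HasGradientAt f (g x) x)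
    (hconv : ∀ x y, 0 ≤ f x - f y - ⟪g y, x - y⟫)
    (X X' X'' : ℝ → E)
    (hX' : ∀ t ∈ Set.Ioi (0:ℝ), HasDerivAt X (X' t) t)
    (hX'' : ∀ t ∈ Set.Ioi (0:ℝ), HasDerivAt X' (X'' t) t)
    (hODE : ∀ t ∈ Set.Ioi (0:ℝ), X'' t + (3 / t) • X' t + g (X t) = 0)
    (X₀ : E) (hX0 : Tendsto X (𝓝[>] (0:ℝ)) (𝓝 X₀))
    (hXd0 : Tendsto X' (𝓝[>] (0:ℝ)) (𝓝 0))
    (Xs : E) (hmin : ∀ x, f Xs ≤ f x) :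
    ∀ t > (0:ℝ),
      t ^ 2 * (f (X t) - f Xs)
        + (1 / 2) * ‖t • X' t + (2:ℝ) • (X t - Xs)‖ ^ 2
        + ∫ s in (0:ℝ)..t, 2 * s * (f Xs - f (X s) - ⟪g (X s), Xs - X s⟫)
      = 2 * ‖X₀ - Xs‖ ^ 2 :=
  agm_ode_conservation_law_general f g hgrad hconv X X' X'' hX' hX'' hODE X₀ hX0 hXd0 Xs
end

section
/- Let f : ℝⁿ → ℝ be differentiable, μ-strongly convex with minimizer X⋆, and let X be a twice differentiable solution of 0 = Ẍ + 2√μ Ẋ + ∇f(X) on [0,∞) with X(0) = X₀, Ẋ(0) = 0. Then for all t ≥ 0, f(X(t)) − f⋆ ≤ e^{−√μ t}( f(X₀) − f⋆ + (μ/2)‖X₀ − X⋆‖² ). -/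
/-!
Along a solution, the Lyapunov energy `f(X) - f⋆ + ½‖Ẋ + √μ (X - X⋆)‖²` satisfies
`Ė ≤ -√μ E`: after substituting the ODE, `Ė + √μ E` equals `√μ` times the strong-convexity
defect `f(X) - f⋆ - ⟪∇f(X), X - X⋆⟫ + (μ/2)‖X - X⋆‖²` (which is `≤ 0`) minus `(√μ/2)‖Ẋ‖²`.
Grönwall gives `E(t) ≤ e^{-√μ t} E(0)`, and `E(0)` is the bracket on the right since `Ẋ(0) = 0`.
-/

open scoped RealInnerProductSpace

theorem le_mul_exp_of_hasDerivAt_le_mul {V V' : ℝ → ℝ} {K a : ℝ}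
    (hV : ∀ t ∈ Set.Ici a, HasDerivAt V (V' t) t) (hV' : ∀ t ∈ Set.Ici a, V' t ≤ K * V t) :
    ∀ t ≥ a, V t ≤ V a * Real.exp (K * (t - a)) := by
  intro t ht
  have hbound := le_gronwallBound_of_liminf_deriv_right_le (f := V) (f' := V') (δ := V a)
    (K := K) (ε := 0) (b := t)
    (fun x hx => (hV x hx.1).continuousAt.continuousWithinAt)
    (fun x hx _ hr => (hV x hx.1).hasDerivWithinAt.liminf_right_slope_le hr) le_rfl
    (fun x hx => by simpa using hV' x hx.1) t ⟨ht, le_rfl⟩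
  rwa [gronwallBound_ε0] at hbound

section HeavyBall

variable {E : Type*} [NormedAddCommGroup E] [InnerProductSpace ℝ E]

theorem HasGradientAt.comp_hasDerivAt [CompleteSpace E] {f : E → ℝ} {g : E} {X : ℝ → E} {v : E}
    {t : ℝ} (hf : HasGradientAt f g (X t)) (hX : HasDerivAt X v t) :
    HasDerivAt (fun s => f (X s)) ⟪g, v⟫ t := by
  simpa [InnerProductSpace.toDual_apply_apply, Function.comp_def] using
    hf.hasFDerivAt.comp_hasDerivAt t hX

noncomputable def heavyBallEnergy (f : E → ℝ) (s : ℝ) (xs x v : E) : ℝ :=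
  f x - f xs + ‖v + s • (x - xs)‖ ^ 2 / 2

theorem hasDerivAt_heavyBallEnergy [CompleteSpace E] {f : E → ℝ} {g : E} {s : ℝ} {xs : E}
    {X X' : ℝ → E} {v a : E} {t : ℝ}
    (hf : HasGradientAt f g (X t)) (hX : HasDerivAt X v t) (hX' : HasDerivAt X' a t) :
    HasDerivAt (fun r => heavyBallEnergy f s xs (X r) (X' r))
      (⟪g, v⟫ + ⟪X' t + s • (X t - xs), a + s • v⟫) t := by
  have hu : HasDerivAt (fun r => X' r + s • (X r - xs)) (a + s • v) t :=
    hX'.add ((hX.sub_const xs).const_smul s)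
  exact (((hf.comp_hasDerivAt hX).sub_const (f xs)).add (hu.norm_sq.div_const 2)).congr_deriv
    (by ring)

theorem inner_add_inner_le_neg_mul_heavyBallEnergy {f : E → ℝ} {μ s : ℝ} (hs : 0 ≤ s)
    (hsμ : s ^ 2 = μ) {xs x v a g : E}
    (hsc : f x + ⟪g, xs - x⟫ + (μ / 2) * ‖xs - x‖ ^ 2 ≤ f xs)
    (hode : a + (2 * s) • v + g = 0) :
    ⟪g, v⟫ + ⟪v + s • (x - xs), a + s • v⟫ ≤ -s * heavyBallEnergy f s xs x v := by
  have ha : a + s • v = -(s • v + g) := by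
    rw [← add_eq_zero_iff_eq_neg, ← hode]; module
  have hsc' : f x - f xs ≤ ⟪g, x - xs⟫ - (μ / 2) * ‖x - xs‖ ^ 2 := by
    rw [← neg_sub x xs, inner_neg_right, norm_neg] at hsc
    linarith
  rw [← hsμ] at hsc'
  rw [ha, heavyBallEnergy]
  simp only [inner_add_left, inner_add_right, inner_neg_right, real_inner_smul_left,
    real_inner_smul_right, norm_add_sq_real, norm_smul, Real.norm_eq_abs, abs_of_nonneg hs,
    real_inner_comm g v, real_inner_comm v (x - xs), real_inner_comm g (x - xs),
    real_inner_self_eq_norm_sq]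
  nlinarith [mul_le_mul_of_nonneg_left hsc' hs, mul_nonneg hs (sq_nonneg ‖v‖)]

end HeavyBall

theorem sc_agm_ode_rate_general
    {E : Type*} [NormedAddCommGroup E] [InnerProductSpace ℝ E] [CompleteSpace E]
    (f : E → ℝ) (g : E → E)
    (hgrad : ∀ x, HasGradientAt f (g x) x)
    (μ : ℝ) (hμ : 0 < μ)
    (hsc : ∀ x y, f x + ⟪g x, y - x⟫ + (μ / 2) * ‖y - x‖ ^ 2 ≤ f y)
    (X X' X'' : ℝ → E)
    (hX' : ∀ t ∈ Set.Ici (0:ℝ), HasDerivAt X (X' t) t)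
    (hX'' : ∀ t ∈ Set.Ici (0:ℝ), HasDerivAt X' (X'' t) t)
    (hODE : ∀ t ∈ Set.Ici (0:ℝ),
      X'' t + (2 * Real.sqrt μ) • X' t + g (X t) = 0)
    (X₀ : E) (hX0 : X 0 = X₀) (hXd0 : X' 0 = 0)
    (Xs : E) :
    ∀ t ≥ (0:ℝ),
      f (X t) - f Xs ≤
        Real.exp (-(Real.sqrt μ) * t)
          * (f X₀ - f Xs + (μ / 2) * ‖X₀ - Xs‖ ^ 2) := by
  set s := Real.sqrt μ
  have hs := Real.sqrt_nonneg μ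
  have hsμ : s ^ 2 = μ := Real.sq_sqrt hμ.le
  have hdecay := le_mul_exp_of_hasDerivAt_le_mul
    (fun t ht => hasDerivAt_heavyBallEnergy (s := s) (xs := Xs) (hgrad (X t)) (hX' t ht)
      (hX'' t ht))
    (fun t ht => inner_add_inner_le_neg_mul_heavyBallEnergy hs hsμ (hsc (X t) Xs) (hODE t ht))
  intro t ht
  have henergy0 : heavyBallEnergy f s Xs (X 0) (X' 0) =
      f X₀ - f Xs + (μ / 2) * ‖X₀ - Xs‖ ^ 2 := by
    rw [heavyBallEnergy, hX0, hXd0, zero_add, norm_smul, mul_pow, Real.norm_eq_abs, sq_abs, hsμ]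
    ring
  calc f (X t) - f Xs ≤ heavyBallEnergy f s Xs (X t) (X' t) :=
        le_add_of_nonneg_right (by positivity)
    _ ≤ _ := hdecay t ht
    _ = _ := by rw [henergy0, sub_zero, mul_comm]

theorem sc_agm_ode_rate
    {E : Type*} [NormedAddCommGroup E] [InnerProductSpace ℝ E] [CompleteSpace E]
    (f : E → ℝ) (g : E → E)
    (hgrad : ∀ x, HasGradientAt f (g x) x)
    (μ : ℝ) (hμ : 0 < μ)
    (hsc : ∀ x y, f x + ⟪g x, y - x⟫ + (μ / 2) * ‖y - x‖ ^ 2 ≤ f y)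
    (X X' X'' : ℝ → E)
    (hX' : ∀ t ∈ Set.Ici (0:ℝ), HasDerivAt X (X' t) t)
    (hX'' : ∀ t ∈ Set.Ici (0:ℝ), HasDerivAt X' (X'' t) t)
    (hODE : ∀ t ∈ Set.Ici (0:ℝ),
      X'' t + (2 * Real.sqrt μ) • X' t + g (X t) = 0)
    (X₀ : E) (hX0 : X 0 = X₀) (hXd0 : X' 0 = 0)
    (Xs : E) (hmin : ∀ x, f Xs ≤ f x) :
    ∀ t ≥ (0:ℝ),
      f (X t) - f Xs ≤
        Real.exp (-(Real.sqrt μ) * t)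
          * (f X₀ - f Xs + (μ / 2) * ‖X₀ - Xs‖ ^ 2) :=
  sc_agm_ode_rate_general f g hgrad μ hμ hsc X X' X'' hX' hX'' hODE X₀ hX0 hXd0 Xs
end
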